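/- arXiv:q-alg/9710001 — 2 statements merged into one kernel-verified Lean document; each statement's English description precedes it below -/
import Mathlib

section
/- Let ρ(ζ) = Σ_{n=0}^∞ (−1)^n ζ^{q^n}/L_n, where L_n = [n]⋯[1] with [i] = x^{q^i} − x. Then for every ζ in a complete extension of F_q((x)) with |ζ| < q^{−1/(q−1)}, the series converges and |ρ(ζ)| < q^{−1/(q−1)}. -/
/- STATEMENT 5: Let ρ(ζ) = Σ_{n≥0} (-1)^n ζ^{q^n}/L_n, with L_n = [n]⋯[1],
   [i] = x^{q^i} - x. For every ζ in a complete non-Archimedean normed field extension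
   of F_q((x)) (axiomatized by a distinguished element x with ‖x‖ = q⁻¹)
   with ‖ζ‖ < q^{-1/(q-1)}, the series converges and its sum ρ(ζ) satisfies
   ‖ρ(ζ)‖ < q^{-1/(q-1)}. -/

noncomputable section

open Filter Topology

def carBr {C : Type*} [Field C] (x : C) (q i : ℕ) : C := x ^ q ^ i - x

def carL {C : Type*} [Field C] (x : C) (q : ℕ) : ℕ → C
  | 0 => 1
  | n + 1 => carBr x q (n + 1) * carL x q n

theorem carlitz_rho_bound
    (p γ : ℕ) (hp : p.Prime) (hγ : 0 < γ) (q : ℕ) (hq : q = p ^ γ)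
    (C : Type*) [NormedField C] [CompleteSpace C]
    (hna : ∀ a b : C, ‖a + b‖ ≤ max ‖a‖ ‖b‖)
    (x : C) (hx : ‖x‖ = (q : ℝ)⁻¹)
    (ζ : C) (hζ : ‖ζ‖ < (q : ℝ) ^ (-(1 : ℝ) / ((q : ℝ) - 1))) :
    ∃ l : C,
      Tendsto (fun N => ∑ n ∈ Finset.range N, (-1 : C) ^ n * ζ ^ q ^ n / carL x q n)
        atTop (𝓝 l) ∧
      ‖l‖ < (q : ℝ) ^ (-(1 : ℝ) / ((q : ℝ) - 1)) := by
  haveI : IsUltrametricDist C :=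
    IsUltrametricDist.isUltrametricDist_of_forall_norm_add_le_max_norm hna
  have hq2 : 2 ≤ q := by
    subst hq
    calc 2 ≤ p := hp.two_le
    _ ≤ p ^ γ := Nat.le_self_pow hγ.ne' p
  have hQ2 : (2:ℝ) ≤ (q:ℝ) := by exact_mod_cast hq2
  have hQ1 : (1:ℝ) < (q:ℝ) := by linarith
  have hQ0 : (0:ℝ) < (q:ℝ) := by linarith
  set B : ℝ := (q:ℝ) ^ (-(1:ℝ)/((q:ℝ)-1)) with hBdef
  have hB0 : 0 < B := Real.rpow_pos_of_pos hQ0 _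
  set f : ℕ → C := fun n => (-1 : C) ^ n * ζ ^ q ^ n / carL x q n with hfdef
  -- norm of the bracket [i] for i ≥ 1
  have hbr : ∀ i : ℕ, 1 ≤ i → ‖carBr x q i‖ = (q:ℝ)⁻¹ := by
    intro i hi
    have h2 : 2 ≤ q ^ i := le_trans hq2 (Nat.le_self_pow (by omega) q)
    have hxq : ‖x ^ q ^ i‖ < ‖x‖ := by
      rw [norm_pow, hx]
      calc ((q:ℝ)⁻¹) ^ q ^ i ≤ ((q:ℝ)⁻¹) ^ 2 :=
            pow_le_pow_of_le_one (by positivity) (by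
              rw [inv_le_one_iff₀]; right; linarith) h2
      _ < (q:ℝ)⁻¹ := by
            rw [sq]
            nlinarith [inv_pos.mpr hQ0, (inv_lt_one_of_one_lt₀ hQ1 : (q:ℝ)⁻¹ < 1)]
    have hne : ‖x ^ q ^ i‖ ≠ ‖-x‖ := by rw [norm_neg]; exact ne_of_lt hxq
    have := IsUltrametricDist.norm_add_eq_max_of_norm_ne_norm hne
    rw [show carBr x q i = x ^ q ^ i + (-x) by rw [carBr]; ring, this, norm_neg,
      max_eq_right (le_of_lt hxq), hx]
  -- norm of L_n
  have hL : ∀ n : ℕ, ‖carL x q n‖ = ((q:ℝ)⁻¹) ^ n := by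
    intro n
    induction n with
    | zero => simp [carL]
    | succ k ih =>
        rw [carL, norm_mul, hbr (k+1) (by omega), ih, pow_succ]
        ring
  have hLne : ∀ n : ℕ, carL x q n ≠ 0 := by
    intro n h
    have h0 : (0:ℝ) = ((q:ℝ)⁻¹) ^ n := by rw [← hL n, h, norm_zero]
    exact (pow_pos (inv_pos.mpr hQ0) n).ne' h0.symm
  -- norm of terms
  have hnorm : ∀ n : ℕ, ‖f n‖ = ‖ζ‖ ^ q ^ n * (q:ℝ) ^ n := by
    intro n
    rw [hfdef]
    simp only [norm_div, norm_mul, norm_pow, norm_neg, norm_one, one_pow, one_mul, hL]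
    rw [div_eq_mul_inv, ← inv_pow, inv_inv]
  set t : ℝ := ‖ζ‖ / B with htdef
  have ht0 : 0 ≤ t := div_nonneg (norm_nonneg _) hB0.le
  have ht1 : t < 1 := (div_lt_one hB0).mpr hζ
  -- the key estimate
  have hkey : ∀ n : ℕ, ‖f n‖ ≤ ‖ζ‖ * t ^ n := by
    intro n
    rw [hnorm]
    -- Bernoulli: 1 + n(q-1) ≤ q^n
    have hbern : 1 + (n:ℝ) * ((q:ℝ) - 1) ≤ (q:ℝ) ^ n := by
      have h1 := one_add_mul_le_pow (a := (q:ℝ) - 1) (by linarith) n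
      have h2 : (1 + ((q:ℝ) - 1)) = (q:ℝ) := by ring
      rwa [h2] at h1
    have hqn1 : n + 1 ≤ q ^ n := by
      have h1 : ((n:ℝ)) + 1 ≤ ((q ^ n : ℕ) : ℝ) := by
        push_cast
        nlinarith [Nat.cast_nonneg (α := ℝ) n]
      exact_mod_cast h1
    obtain ⟨m, hm⟩ : ∃ m, q ^ n = n + m + 1 := ⟨q ^ n - n - 1, by omega⟩
    have hcast : ((m + n : ℕ) : ℝ) = (q:ℝ) ^ n - 1 := by
      have h3 : ((q ^ n : ℕ):ℝ) = ((n + m + 1 : ℕ):ℝ) := by rw [hm]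
      push_cast at h3 ⊢
      linarith
    -- q^n * B^(q^n - 1) ≤ 1
    have hmain : (q:ℝ) ^ n * B ^ (m + n) ≤ 1 := by
      rw [hBdef, ← Real.rpow_natCast ((q:ℝ) ^ (-(1:ℝ)/((q:ℝ)-1))) (m+n),
        ← Real.rpow_mul hQ0.le, ← Real.rpow_natCast (q:ℝ) n, ← Real.rpow_add hQ0]
      apply Real.rpow_le_one_of_one_le_of_nonpos hQ1.le
      have hK : ((n:ℝ)) * ((q:ℝ) - 1) ≤ ((m + n : ℕ) : ℝ) := by
        rw [hcast]; linarith
      have hpos : (0:ℝ) < (q:ℝ) - 1 := by linarith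
      have h4 : -(1:ℝ)/((q:ℝ)-1) * ((m+n:ℕ):ℝ) ≤ -(n:ℝ) := by
        rw [neg_div, neg_mul, neg_le_neg_iff, div_mul_eq_mul_div, one_mul,
          le_div_iff₀ hpos]
        linarith
      push_cast at h4 ⊢
      linarith
    have hζm : ‖ζ‖ ^ m ≤ B ^ m := pow_le_pow_left₀ (norm_nonneg _) hζ.le m
    have hstep : (q:ℝ) ^ n * ‖ζ‖ ^ m * B ^ n ≤ 1 := by
      calc (q:ℝ) ^ n * ‖ζ‖ ^ m * B ^ n ≤ (q:ℝ) ^ n * B ^ m * B ^ n := by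
            apply mul_le_mul_of_nonneg_right
              (mul_le_mul_of_nonneg_left hζm (by positivity)) (by positivity)
        _ = (q:ℝ) ^ n * B ^ (m + n) := by rw [pow_add]; ring
        _ ≤ 1 := hmain
    rw [htdef, div_pow, ← mul_div_assoc, le_div_iff₀ (by positivity : (0:ℝ) < B ^ n), hm]
    calc ‖ζ‖ ^ (n + m + 1) * (q:ℝ) ^ n * B ^ n
        = (‖ζ‖ * ‖ζ‖ ^ n) * ((q:ℝ) ^ n * ‖ζ‖ ^ m * B ^ n) := by
          rw [pow_add, pow_add, pow_one]; ring
      _ ≤ (‖ζ‖ * ‖ζ‖ ^ n) * 1 := mul_le_mul_of_nonneg_left hstep (by positivity)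
      _ = ‖ζ‖ * ‖ζ‖ ^ n := mul_one _
  -- convergence
  have htend : Tendsto (fun n => ‖f n‖) atTop (𝓝 0) := by
    apply squeeze_zero (fun n => norm_nonneg _) hkey
    rw [show (0:ℝ) = ‖ζ‖ * 0 by ring]
    exact (tendsto_pow_atTop_nhds_zero_of_lt_one ht0 ht1).const_mul _
  have hf0 : Tendsto f cofinite (𝓝 0) := by
    rw [Nat.cofinite_eq_atTop]
    exact tendsto_zero_iff_norm_tendsto_zero.mpr htend
  have hsum : Summable f := NonarchimedeanAddGroup.summable_of_tendsto_cofinite_zero hf0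
  refine ⟨∑' n, f n, hsum.hasSum.tendsto_sum_nat, ?_⟩
  have hle : ‖∑' n, f n‖ ≤ ‖ζ‖ := by
    apply IsUltrametricDist.norm_tsum_le_of_forall_le_of_nonneg (norm_nonneg ζ)
    intro n
    calc ‖f n‖ ≤ ‖ζ‖ * t ^ n := hkey n
      _ ≤ ‖ζ‖ * 1 := mul_le_mul_of_nonneg_left (pow_le_one₀ ht0 ht1.le) (norm_nonneg _)
      _ = ‖ζ‖ := mul_one _
  exact lt_of_le_of_lt hle hζ
end
end

section
/- Define on the space X of continuous F_q-linear functions O → C̄ the operators a⁺φ = φ^q − φ and a⁻φ = (Δφ)^{1/q} where Δφ(t) = φ(xt) − xφ(t) (well-defined since Δφ is always a q-th power in X). Then a⁻a⁺ − a⁺a⁻ = [1]^{1/q} I, i.e. (a⁻a⁺ − a⁺a⁻)φ(t) = (x^q − x)^{1/q} φ(t) = (x − x^{1/q})φ(t) for all φ ∈ X. -/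
/-
Raising to the `q`-th power is an injective ring endomorphism in characteristic `p`, so it
suffices to compare `q`-th powers. Additivity of Frobenius turns
`(a⁻a⁺φ - a⁺a⁻φ)(t)^q` into `Δ(φ^q - φ)(t) - (Δφ(t))^q + Δφ(t)`, in which everything cancels
except `(x^q - x) φ(t)^q = (r φ(t))^q`.
-/

noncomputable section

open Filter Topology

/-- The bracket `[i] = x^{q^i} - x` as a polynomial over `F_q`. -/
def carBrP (Fq : Type*) [CommRing Fq] (q i : ℕ) : Polynomial Fq :=
  Polynomial.X ^ q ^ i - Polynomial.X

/-- `D_0 = 1`, `D_i = [i] D_{i-1}^q`, as polynomials over `F_q`. -/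
def carDP (Fq : Type*) [CommRing Fq] (q : ℕ) : ℕ → Polynomial Fq
  | 0 => 1
  | i + 1 => carBrP Fq q (i + 1) * (carDP Fq q i) ^ q

/-- The Carlitz polynomial function `e_i(t) = ∏_{m ∈ F_q[x], deg m < i} (t - m)`,
for `t ∈ O`, with values in `C̄`; here `σ : F_q[x] → O` and `ι : O → C̄` are the
structural embeddings, and the product runs over all polynomials `m` of degree `< i`,
enumerated by coefficient tuples. -/
def carE {Fq O Cbar : Type*} [Field Fq] [Fintype Fq] [CommRing O] [Field Cbar]
    (σ : Polynomial Fq →+* O) (ι : O →+* Cbar) (i : ℕ) (t : O) : Cbar :=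
  ∏ c : Fin i → Fq,
    (ι t - ι (σ (∑ k : Fin i, Polynomial.C (c k) * Polynomial.X ^ (k : ℕ))))

/-- The normalized Carlitz function `f_i(t) = e_i(t)/D_i`. -/
def carF {Fq O Cbar : Type*} [Field Fq] [Fintype Fq] [CommRing O] [Field Cbar]
    (q : ℕ) (σ : Polynomial Fq →+* O) (ι : O →+* Cbar) (i : ℕ) (t : O) : Cbar :=
  carE σ ι i t / ι (σ (carDP Fq q i))

/-- Membership in the space `X` of continuous `F_q`-linear functions `O → C̄`. -/
def IsCarFun {Fq O Cbar : Type*} [Field Fq] [Fintype Fq] [CommRing O]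
    [TopologicalSpace O] [Field Cbar] [TopologicalSpace Cbar]
    (σ : Polynomial Fq →+* O) (ι : O →+* Cbar) (φ : O → Cbar) : Prop :=
  Continuous φ ∧ (∀ t s : O, φ (t + s) = φ t + φ s) ∧
    ∀ (β : Fq) (t : O),
      φ (σ (Polynomial.C β) * t) = ι (σ (Polynomial.C β)) * φ t

/-- `φ = Σ c_i f_i` as a uniformly convergent series with `c_i → 0`. -/
def HasCarExpansion {O Cbar : Type*} [NormedField Cbar]
    (f : ℕ → O → Cbar) (φ : O → Cbar) (c : ℕ → Cbar) : Prop :=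
  Tendsto c atTop (𝓝 (0 : Cbar)) ∧
    TendstoUniformly (fun N t => ∑ i ∈ Finset.range N, c i * f i t) φ atTop

/-- The difference operator `(Δφ)(t) = φ(xt) - xφ(t)` on functions `O → C̄`. -/
def carDeltaFun {Fq O Cbar : Type*} [Field Fq] [Fintype Fq] [CommRing O] [Field Cbar]
    (σ : Polynomial Fq →+* O) (ι : O →+* Cbar) (φ : O → Cbar) : O → Cbar :=
  fun t => φ (σ Polynomial.X * t) - ι (σ Polynomial.X) * φ t

section Commutator

variable {R : Type*} [CommRing R] {p : ℕ} [ExpChar R p] (n : ℕ) {u v ξ ψ χ r : R}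

theorem commutator_pow_expChar_pow_eq (hψ : ψ ^ p ^ n = u - ξ * v)
    (hχ : χ ^ p ^ n = (u ^ p ^ n - u) - ξ * (v ^ p ^ n - v))
    (hr : r ^ p ^ n = ξ ^ p ^ n - ξ) :
    (χ - (ψ ^ p ^ n - ψ)) ^ p ^ n = (r * v) ^ p ^ n := by
  rw [sub_pow_expChar_pow, sub_pow_expChar_pow, mul_pow, hr, hχ, hψ, sub_pow_expChar_pow,
    mul_pow]
  ring

theorem commutator_eq_of_pow_expChar_pow [IsReduced R] (hψ : ψ ^ p ^ n = u - ξ * v)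
    (hχ : χ ^ p ^ n = (u ^ p ^ n - u) - ξ * (v ^ p ^ n - v))
    (hr : r ^ p ^ n = ξ ^ p ^ n - ξ) :
    χ - (ψ ^ p ^ n - ψ) = r * v :=
  iterateFrobenius_inj R p n (commutator_pow_expChar_pow_eq n hψ hχ hr)

end Commutator

theorem carlitz_ccr_general
    (p γ : ℕ) (hp : p.Prime) (q : ℕ) (hq : q = p ^ γ)
    (Fq : Type*) [Field Fq] [Fintype Fq]
    (O : Type*) [CommRing O]
    (Cbar : Type*) [NormedField Cbar]
    [CharP Cbar p]
    (σ : Polynomial Fq →+* O) (ι : O →+* Cbar)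
    (φ ψ χ : O → Cbar)
    (hψ : ∀ t : O, ψ t ^ q = carDeltaFun σ ι φ t)
    (hχ : ∀ t : O, χ t ^ q = carDeltaFun σ ι (fun s => φ s ^ q - φ s) t)
    (r : Cbar) (hr : r ^ q = ι (σ Polynomial.X) ^ q - ι (σ Polynomial.X)) :
    ∀ t : O, χ t - (ψ t ^ q - ψ t) = r * φ t := by
  have : ExpChar Cbar p := ExpChar.prime hp
  subst hq
  intro t
  exact commutator_eq_of_pow_expChar_pow γ (hψ t) (hχ t) hr

theorem carlitz_ccr
    (p γ : ℕ) (hp : p.Prime) (hγ : 0 < γ) (q : ℕ) (hq : q = p ^ γ)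
    (Fq : Type*) [Field Fq] [Fintype Fq] (hcard : Fintype.card Fq = q)
    (O : Type*) [CommRing O] [TopologicalSpace O] [IsTopologicalRing O]
    [CompactSpace O] [T2Space O]
    (Cbar : Type*) [NormedField Cbar] [CompleteSpace Cbar] [IsAlgClosed Cbar]
    [CharP Cbar p]
    (hna : ∀ a b : Cbar, ‖a + b‖ ≤ max ‖a‖ ‖b‖)
    (σ : Polynomial Fq →+* O) (ι : O →+* Cbar)
    (φ ψ χ : O → Cbar) (hφ : IsCarFun σ ι φ)
    (hψ : ∀ t : O, ψ t ^ q = carDeltaFun σ ι φ t)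
    (hχ : ∀ t : O, χ t ^ q = carDeltaFun σ ι (fun s => φ s ^ q - φ s) t)
    (r : Cbar) (hr : r ^ q = ι (σ Polynomial.X) ^ q - ι (σ Polynomial.X)) :
    ∀ t : O, χ t - (ψ t ^ q - ψ t) = r * φ t :=
  carlitz_ccr_general p γ hp q hq Fq O Cbar σ ι φ ψ χ hψ hχ r hr
end
end
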